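/- arXiv:1309.0661 — 3 statements merged into one kernel-verified Lean document; each statement's English description precedes it below -/
import Mathlib

section
/- Let w₀, w₁, w₂, d be positive integers, let Q(X) = (1+dX)·(1+w₀X)⁻¹ ∈ ℚ[[X]], let γ₁, γ₂, γ₃ ∈ ℚ be the coefficients of X, X², X³ in Q, and set S₀ = d/w₀, S₂ = S₀γ₁², S₀₁ = S₀γ₂. Then (γ₁S₂ + γ₁S₀₁ − 6γ₁³ − 12γ₁γ₂ − 6γ₃)/(w₀w₁w₂) = (d−w₀)(d−2w₀)(d−3w₀)(d−4w₀)/(w₀²w₁w₂). -/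
/-!
The quotient `Q = (1 + d X) / (1 + w₀ X)` satisfies `Q · (1 + w₀ X) = 1 + d X`, so its coefficients
obey `γₙ₊₁ + w₀ γₙ = 0` for `n ≥ 1` with `γ₁ = d - w₀`; hence `γₙ₊₁ = (d - w₀) (-w₀)ⁿ`.
Substituting `γ₁, γ₂, γ₃` turns the Thom polynomial into a polynomial identity in `d` and `w₀`.
-/

open PowerSeries

/-- The linear power series `1 + r·X` over `ℚ`. -/
noncomputable def lin (r : ℚ) : ℚ⟦X⟧ := 1 + C r * X

lemma constantCoeff_lin (r : ℚ) : constantCoeff (lin r) = 1 := by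
  simp [lin]

lemma coeff_succ_mul_lin (f : ℚ⟦X⟧) (r : ℚ) (n : ℕ) :
    coeff (n + 1) (f * lin r) = coeff (n + 1) f + r * coeff n f := by
  simp only [lin, mul_add, mul_one, ← mul_assoc, coeff_succ_mul_X, coeff_mul_C, map_add]
  ring

lemma coeff_one_lin (r : ℚ) : coeff 1 (lin r) = r := by
  simp [lin]

lemma coeff_succ_succ_lin (r : ℚ) (n : ℕ) : coeff (n + 2) (lin r) = 0 := by
  simp [lin, coeff_one]

lemma coeff_succ_lin_mul_inv_lin (r s : ℚ) (n : ℕ) :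
    coeff (n + 1) (lin s * (lin r)⁻¹) = (s - r) * (-r) ^ n := by
  set Q := lin s * (lin r)⁻¹
  have hQ : Q * lin r = lin s := by
    rw [mul_assoc, PowerSeries.inv_mul_cancel _ (by simp [constantCoeff_lin]), mul_one]
  induction n with
  | zero =>
    have h := coeff_succ_mul_lin Q r 0
    have hQ₀ : coeff 0 Q = 1 := by simp [Q, constantCoeff_lin]
    rw [hQ, coeff_one_lin, hQ₀] at h
    simp only [zero_add, pow_zero, mul_one]
    linarith
  | succ n ih =>
    have h := coeff_succ_mul_lin Q r (n + 1)
    rw [hQ, coeff_succ_succ_lin, ih] at h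
    rw [pow_succ]
    linarith

theorem stmt_5_general (w₀ w₁ w₂ d : ℕ) (hw₀ : 0 < w₀)
    (Q : ℚ⟦X⟧) (hQ : Q = lin (d : ℚ) * (lin (w₀ : ℚ))⁻¹)
    (γ₁ γ₂ γ₃ : ℚ) (hγ₁ : γ₁ = coeff 1 Q) (hγ₂ : γ₂ = coeff 2 Q)
    (hγ₃ : γ₃ = coeff 3 Q)
    (S₀ S₂ S₀₁ : ℚ) (hS₀ : S₀ = (d : ℚ) / (w₀ : ℚ))
    (hS₂ : S₂ = S₀ * γ₁ ^ 2) (hS₀₁ : S₀₁ = S₀ * γ₂) :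
    (γ₁ * S₂ + γ₁ * S₀₁ - 6 * γ₁ ^ 3 - 12 * γ₁ * γ₂ - 6 * γ₃) /
        ((w₀ : ℚ) * (w₁ : ℚ) * (w₂ : ℚ)) =
      ((d : ℚ) - (w₀ : ℚ)) * ((d : ℚ) - 2 * (w₀ : ℚ)) * ((d : ℚ) - 3 * (w₀ : ℚ)) *
          ((d : ℚ) - 4 * (w₀ : ℚ)) /
        ((w₀ : ℚ) ^ 2 * (w₁ : ℚ) * (w₂ : ℚ)) := by
  have h₁ : γ₁ = d - w₀ := by
    simpa [hγ₁, hQ] using coeff_succ_lin_mul_inv_lin w₀ d 0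
  have h₂ : γ₂ = (d - w₀) * -w₀ := by
    simpa [hγ₂, hQ] using coeff_succ_lin_mul_inv_lin w₀ d 1
  have h₃ : γ₃ = (d - w₀) * w₀ ^ 2 := by
    simpa [hγ₃, hQ] using coeff_succ_lin_mul_inv_lin w₀ d 2
  have hw₀' : (w₀ : ℚ) ≠ 0 := by positivity
  rw [show (w₀ : ℚ) ^ 2 * w₁ * w₂ = w₀ * (w₀ * w₁ * w₂) by ring, ← div_div _ (w₀ : ℚ)]
  congr 1
  subst h₁ h₂ h₃ hS₂ hS₀₁ hS₀
  field_simp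
  ring

theorem stmt_5 (w₀ w₁ w₂ d : ℕ) (hw₀ : 0 < w₀) (hw₁ : 0 < w₁) (hw₂ : 0 < w₂)
    (hd : 0 < d)
    (Q : ℚ⟦X⟧) (hQ : Q = lin (d : ℚ) * (lin (w₀ : ℚ))⁻¹)
    (γ₁ γ₂ γ₃ : ℚ) (hγ₁ : γ₁ = coeff 1 Q) (hγ₂ : γ₂ = coeff 2 Q)
    (hγ₃ : γ₃ = coeff 3 Q)
    (S₀ S₂ S₀₁ : ℚ) (hS₀ : S₀ = (d : ℚ) / (w₀ : ℚ))
    (hS₂ : S₂ = S₀ * γ₁ ^ 2) (hS₀₁ : S₀₁ = S₀ * γ₂) :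
    (γ₁ * S₂ + γ₁ * S₀₁ - 6 * γ₁ ^ 3 - 12 * γ₁ * γ₂ - 6 * γ₃) /
        ((w₀ : ℚ) * (w₁ : ℚ) * (w₂ : ℚ)) =
      ((d : ℚ) - (w₀ : ℚ)) * ((d : ℚ) - 2 * (w₀ : ℚ)) * ((d : ℚ) - 3 * (w₀ : ℚ)) *
          ((d : ℚ) - 4 * (w₀ : ℚ)) /
        ((w₀ : ℚ) ^ 2 * (w₁ : ℚ) * (w₂ : ℚ)) :=
  stmt_5_general w₀ w₁ w₂ d hw₀ Q hQ γ₁ γ₂ γ₃ hγ₁ hγ₂ hγ₃ S₀ S₂ S₀₁ hS₀ hS₂ hS₀₁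
end

section
/- Let w₀, w₁, w₂, d₁, d₂ be positive integers, let Q(X) = (1+d₁X)(1+d₂X)·(1+w₀X)⁻¹ ∈ ℚ[[X]], let γ₁, γ₂, γ₃ ∈ ℚ be the coefficients of X, X², X³ in Q, and set S₀ = d₁d₂/w₀, S₁ = S₀γ₁, S₂ = S₀γ₁², S₀₁ = S₀γ₂. Then (1/(w₀w₁w₂))·(1/6)·( S₀³ − 3S₀S₁ + 2S₂ + 2S₀₁ − 3S₀²γ₁ + 3S₁γ₁ + 6S₀γ₁² + 6S₀γ₂ − 6γ₁³ − 18γ₁γ₂ − 12γ₃ ) = (d₁−w₀)(d₁−2w₀)(d₁−3w₀)(d₂−w₀)(d₂−2w₀)(d₂−3w₀)/(6w₀⁴w₁w₂). -/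
/-!
Expanding `(1 + aX)⁻¹ = ∑ (-a)ⁿ Xⁿ` gives `γ₁ = d₁ + d₂ - w₀` and
`γ₂ = (w₀ - d₁)(w₀ - d₂)`, `γ₃ = -w₀ γ₂`; after substitution, and cancelling the factor `1/(w₁w₂)`
common to both sides, the claim is an identity of rational functions in `w₀, d₁, d₂` whose
only denominators are powers of `w₀`.
-/

open PowerSeries

lemma inv_lin (a : ℚ) : (lin a)⁻¹ = mk fun n => (-a) ^ n := by
  rw [eq_comm, PowerSeries.eq_inv_iff_mul_eq_one (by simp [lin]), mul_comm]
  ext (_ | n)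
  · simp [lin]
  · simp only [lin, add_mul, one_mul, mul_assoc, map_add, coeff_mk, coeff_C_mul,
      coeff_succ_X_mul, coeff_one, Nat.add_eq_zero_iff, one_ne_zero, and_false, ↓reduceIte]
    ring

lemma lin_mul_lin (b c : ℚ) : lin b * lin c = 1 + C (b + c) * X + C (b * c) * X ^ 2 := by
  simp only [lin, map_add, map_mul]
  ring

lemma coeff_one_lin_mul_lin_mul_inv_lin (a b c : ℚ) :
    coeff 1 (lin b * lin c * (lin a)⁻¹) = b + c - a := by
  rw [lin_mul_lin, inv_lin]
  simp only [add_mul, one_mul, mul_assoc, map_add, coeff_mk, coeff_C_mul, coeff_succ_X_mul,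
    coeff_X_pow_mul', Nat.not_ofNat_le_one, ↓reduceIte, pow_one, pow_zero, mul_one, mul_zero,
    add_zero]
  ring

lemma coeff_add_two_lin_mul_lin_mul_inv_lin (a b c : ℚ) (n : ℕ) :
    coeff (n + 2) (lin b * lin c * (lin a)⁻¹) = (-a) ^ n * ((a - b) * (a - c)) := by
  rw [lin_mul_lin, inv_lin]
  simp only [add_mul, one_mul, mul_assoc, pow_succ, pow_zero, map_add, coeff_mk, coeff_C_mul,
    coeff_succ_X_mul, mul_neg, neg_mul, neg_neg]
  ring

theorem stmt_7_general (w₀ w₁ w₂ d₁ d₂ : ℕ) (hw₀ : 0 < w₀)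
    (Q : ℚ⟦X⟧) (hQ : Q = lin (d₁ : ℚ) * lin (d₂ : ℚ) * (lin (w₀ : ℚ))⁻¹)
    (γ₁ γ₂ γ₃ : ℚ) (hγ₁ : γ₁ = coeff 1 Q) (hγ₂ : γ₂ = coeff 2 Q)
    (hγ₃ : γ₃ = coeff 3 Q)
    (S₀ S₁ S₂ S₀₁ : ℚ) (hS₀ : S₀ = (d₁ : ℚ) * (d₂ : ℚ) / (w₀ : ℚ))
    (hS₁ : S₁ = S₀ * γ₁) (hS₂ : S₂ = S₀ * γ₁ ^ 2) (hS₀₁ : S₀₁ = S₀ * γ₂) :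
    (1 / ((w₀ : ℚ) * (w₁ : ℚ) * (w₂ : ℚ))) * (1 / 6) *
        (S₀ ^ 3 - 3 * S₀ * S₁ + 2 * S₂ + 2 * S₀₁ - 3 * S₀ ^ 2 * γ₁ + 3 * S₁ * γ₁
          + 6 * S₀ * γ₁ ^ 2 + 6 * S₀ * γ₂ - 6 * γ₁ ^ 3 - 18 * γ₁ * γ₂ - 12 * γ₃) =
      ((d₁ : ℚ) - (w₀ : ℚ)) * ((d₁ : ℚ) - 2 * (w₀ : ℚ)) * ((d₁ : ℚ) - 3 * (w₀ : ℚ)) *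
          ((d₂ : ℚ) - (w₀ : ℚ)) * ((d₂ : ℚ) - 2 * (w₀ : ℚ)) * ((d₂ : ℚ) - 3 * (w₀ : ℚ)) /
        (6 * (w₀ : ℚ) ^ 4 * (w₁ : ℚ) * (w₂ : ℚ)) := by
  have hw₀' : (w₀ : ℚ) ≠ 0 := by positivity
  subst hQ hS₀ hS₁ hS₂ hS₀₁
  rw [hγ₁, hγ₂, hγ₃, coeff_one_lin_mul_lin_mul_inv_lin,
    coeff_add_two_lin_mul_lin_mul_inv_lin _ _ _ 0, coeff_add_two_lin_mul_lin_mul_inv_lin _ _ _ 1]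
  field_simp
  ring

theorem stmt_7 (w₀ w₁ w₂ d₁ d₂ : ℕ) (hw₀ : 0 < w₀) (hw₁ : 0 < w₁) (hw₂ : 0 < w₂)
    (hd₁ : 0 < d₁) (hd₂ : 0 < d₂)
    (Q : ℚ⟦X⟧) (hQ : Q = lin (d₁ : ℚ) * lin (d₂ : ℚ) * (lin (w₀ : ℚ))⁻¹)
    (γ₁ γ₂ γ₃ : ℚ) (hγ₁ : γ₁ = coeff 1 Q) (hγ₂ : γ₂ = coeff 2 Q)
    (hγ₃ : γ₃ = coeff 3 Q)
    (S₀ S₁ S₂ S₀₁ : ℚ) (hS₀ : S₀ = (d₁ : ℚ) * (d₂ : ℚ) / (w₀ : ℚ))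
    (hS₁ : S₁ = S₀ * γ₁) (hS₂ : S₂ = S₀ * γ₁ ^ 2) (hS₀₁ : S₀₁ = S₀ * γ₂) :
    (1 / ((w₀ : ℚ) * (w₁ : ℚ) * (w₂ : ℚ))) * (1 / 6) *
        (S₀ ^ 3 - 3 * S₀ * S₁ + 2 * S₂ + 2 * S₀₁ - 3 * S₀ ^ 2 * γ₁ + 3 * S₁ * γ₁
          + 6 * S₀ * γ₁ ^ 2 + 6 * S₀ * γ₂ - 6 * γ₁ ^ 3 - 18 * γ₁ * γ₂ - 12 * γ₃) =
      ((d₁ : ℚ) - (w₀ : ℚ)) * ((d₁ : ℚ) - 2 * (w₀ : ℚ)) * ((d₁ : ℚ) - 3 * (w₀ : ℚ)) *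
          ((d₂ : ℚ) - (w₀ : ℚ)) * ((d₂ : ℚ) - 2 * (w₀ : ℚ)) * ((d₂ : ℚ) - 3 * (w₀ : ℚ)) /
        (6 * (w₀ : ℚ) ^ 4 * (w₁ : ℚ) * (w₂ : ℚ)) :=
  stmt_7_general w₀ w₁ w₂ d₁ d₂ hw₀ Q hQ γ₁ γ₂ γ₃ hγ₁ hγ₂ hγ₃ S₀ S₁ S₂ S₀₁ hS₀ hS₁ hS₂ hS₀₁
end

section
/- Let w₀, w₁, w₂, d₁, d₂ be positive integers, let Q(X) = (1+d₁X)(1+d₂X)·(1+w₀X)⁻¹ ∈ ℚ[[X]], let γ₁, γ₂, γ₃ ∈ ℚ be the coefficients of X, X², X³ in Q, set S₀ = d₁d₂/w₀, S₁ = S₀γ₁, S₂ = S₀γ₁², S₀₁ = S₀γ₂, and let T(X) = 1 + ½(γ₁ − S₀)X + (1/6)(S₀² + 2S₁ − 2γ₁S₀ − γ₁² − γ₂)X² + (1/24)(2γ₁³ − 10γ₁γ₂ + 2γ₁²S₀ + 2γ₂S₀ + 3γ₁S₀² − S₀³ + 14S₀₁ + 5γ₁S₁ − 5S₀S₁ −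 6S₂)X³. Then 1 − (1/(w₀w₁w₂))·(coefficient of X³ in (1+w₀X)(1+w₁X)(1+w₂X)·T(X)) = ((w₀−d₁)(w₀−d₂)/(24w₀⁴w₁w₂))·( d₁²(d₂² + 3d₂w₀ + 2w₀²) + d₁w₀(3d₂² − d₂(19w₀ + 4(w₁+w₂)) + 2w₀(w₀ − 2(w₁+w₂))) + 2w₀²(d₂² + d₂(w₀ − 2(w₁+w₂)) + 2(5w₀(w₁+w₂) + 3w₁w₂)) ). -/
/-! Multiplication by `1 + rX` acts on coefficients by `c (n+1) ↦ c (n+1) + r c n`. This yields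
`γ₁, γ₂` from `(1 + w₀X) Q = (1 + d₁X)(1 + d₂X)` and the cubic coefficient of
`(1 + w₀X)(1 + w₁X)(1 + w₂X) T` in terms of elementary symmetric functions of the weights;
what remains is an identity of rational functions. -/

open PowerSeries

lemma coeff_zero_lin_mul (r : ℚ) (φ : ℚ⟦X⟧) : coeff 0 (lin r * φ) = coeff 0 φ := by
  simp [lin, add_mul, mul_assoc]

lemma coeff_succ_lin_mul (r : ℚ) (φ : ℚ⟦X⟧) (n : ℕ) :
    coeff (n + 1) (lin r * φ) = coeff (n + 1) φ + r * coeff n φ := by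
  rw [lin, add_mul, one_mul, map_add, mul_assoc, mul_comm X, coeff_C_mul, coeff_succ_mul_X]

lemma coeff_three_lin_mul_lin_mul_lin_mul (a b c : ℚ) (φ : ℚ⟦X⟧) :
    coeff 3 (lin a * lin b * lin c * φ) = coeff 3 φ + (a + b + c) * coeff 2 φ
      + (a * b + a * c + b * c) * coeff 1 φ + a * b * c * coeff 0 φ := by
  simp only [mul_assoc, coeff_succ_lin_mul]
  ring

lemma lin_mul_inv_lin (r : ℚ) : lin r * (lin r)⁻¹ = 1 :=
  PowerSeries.mul_inv_cancel _ (by simp [lin])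

/-- Read off coefficientwise from `(1 + rX) Q = (1 + aX)(1 + bX)`. -/
lemma coeff_one_two_lin_mul_lin_mul_inv_lin (a b r : ℚ) :
    coeff 1 (lin a * lin b * (lin r)⁻¹) = a + b - r ∧
      coeff 2 (lin a * lin b * (lin r)⁻¹) = r ^ 2 - (a + b) * r + a * b := by
  set Q := lin a * lin b * (lin r)⁻¹
  have hQ : lin r * Q = lin a * (lin b * 1) := by
    rw [mul_comm, mul_assoc, mul_comm (lin r)⁻¹, lin_mul_inv_lin, mul_one, mul_one]
  have h₀ := congrArg (coeff 0) hQ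
  have h₁ := congrArg (coeff 1) hQ
  have h₂ := congrArg (coeff 2) hQ
  simp only [coeff_succ_lin_mul, coeff_zero_lin_mul, coeff_one] at h₀ h₁ h₂
  norm_num at h₀ h₁ h₂
  refine ⟨by linear_combination h₁ - r * h₀, ?_⟩
  linear_combination h₂ - r * h₁ + r ^ 2 * h₀

theorem stmt_11_general (w₀ w₁ w₂ d₁ d₂ : ℕ) (hw₀ : 0 < w₀) (hw₁ : 0 < w₁) (hw₂ : 0 < w₂)
    (Q : ℚ⟦X⟧) (hQ : Q = lin (d₁ : ℚ) * lin (d₂ : ℚ) * (lin (w₀ : ℚ))⁻¹)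
    (γ₁ γ₂ : ℚ) (hγ₁ : γ₁ = coeff 1 Q) (hγ₂ : γ₂ = coeff 2 Q)
    (S₀ S₁ S₂ S₀₁ : ℚ) (hS₀ : S₀ = (d₁ : ℚ) * (d₂ : ℚ) / (w₀ : ℚ))
    (hS₁ : S₁ = S₀ * γ₁) (hS₂ : S₂ = S₀ * γ₁ ^ 2) (hS₀₁ : S₀₁ = S₀ * γ₂)
    (T : ℚ⟦X⟧)
    (hT : T = 1 + C ((1 / 2) * (γ₁ - S₀)) * X
        + C ((1 / 6) * (S₀ ^ 2 + 2 * S₁ - 2 * γ₁ * S₀ - γ₁ ^ 2 - γ₂)) * X ^ 2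
        + C ((1 / 24) * (2 * γ₁ ^ 3 - 10 * γ₁ * γ₂ + 2 * γ₁ ^ 2 * S₀ + 2 * γ₂ * S₀
            + 3 * γ₁ * S₀ ^ 2 - S₀ ^ 3 + 14 * S₀₁ + 5 * γ₁ * S₁ - 5 * S₀ * S₁
            - 6 * S₂)) * X ^ 3) :
    1 - (1 / ((w₀ : ℚ) * (w₁ : ℚ) * (w₂ : ℚ))) *
        coeff 3 (lin (w₀ : ℚ) * lin (w₁ : ℚ) * lin (w₂ : ℚ) * T) =
      (((w₀ : ℚ) - (d₁ : ℚ)) * ((w₀ : ℚ) - (d₂ : ℚ)) /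
          (24 * (w₀ : ℚ) ^ 4 * (w₁ : ℚ) * (w₂ : ℚ))) *
        ((d₁ : ℚ) ^ 2 * ((d₂ : ℚ) ^ 2 + 3 * (d₂ : ℚ) * (w₀ : ℚ) + 2 * (w₀ : ℚ) ^ 2)
          + (d₁ : ℚ) * (w₀ : ℚ) *
              (3 * (d₂ : ℚ) ^ 2
                - (d₂ : ℚ) * (19 * (w₀ : ℚ) + 4 * ((w₁ : ℚ) + (w₂ : ℚ)))
                + 2 * (w₀ : ℚ) * ((w₀ : ℚ) - 2 * ((w₁ : ℚ) + (w₂ : ℚ))))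
          + 2 * (w₀ : ℚ) ^ 2 *
              ((d₂ : ℚ) ^ 2 + (d₂ : ℚ) * ((w₀ : ℚ) - 2 * ((w₁ : ℚ) + (w₂ : ℚ)))
                + 2 * (5 * (w₀ : ℚ) * ((w₁ : ℚ) + (w₂ : ℚ))
                    + 3 * (w₁ : ℚ) * (w₂ : ℚ)))) := by
  obtain ⟨hQ₁, hQ₂⟩ := coeff_one_two_lin_mul_lin_mul_inv_lin (d₁ : ℚ) (d₂ : ℚ) (w₀ : ℚ)
  rw [hT, coeff_three_lin_mul_lin_mul_lin_mul]
  simp only [map_add, coeff_C_mul, coeff_X_pow, coeff_X, coeff_one]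
  norm_num
  rw [hS₁, hS₂, hS₀₁, hS₀, hγ₁, hγ₂, hQ, hQ₁, hQ₂]
  field_simp
  ring

theorem stmt_11 (w₀ w₁ w₂ d₁ d₂ : ℕ) (hw₀ : 0 < w₀) (hw₁ : 0 < w₁) (hw₂ : 0 < w₂)
    (hd₁ : 0 < d₁) (hd₂ : 0 < d₂)
    (Q : ℚ⟦X⟧) (hQ : Q = lin (d₁ : ℚ) * lin (d₂ : ℚ) * (lin (w₀ : ℚ))⁻¹)
    (γ₁ γ₂ γ₃ : ℚ) (hγ₁ : γ₁ = coeff 1 Q) (hγ₂ : γ₂ = coeff 2 Q)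
    (hγ₃ : γ₃ = coeff 3 Q)
    (S₀ S₁ S₂ S₀₁ : ℚ) (hS₀ : S₀ = (d₁ : ℚ) * (d₂ : ℚ) / (w₀ : ℚ))
    (hS₁ : S₁ = S₀ * γ₁) (hS₂ : S₂ = S₀ * γ₁ ^ 2) (hS₀₁ : S₀₁ = S₀ * γ₂)
    (T : ℚ⟦X⟧)
    (hT : T = 1 + C ((1 / 2) * (γ₁ - S₀)) * X
        + C ((1 / 6) * (S₀ ^ 2 + 2 * S₁ - 2 * γ₁ * S₀ - γ₁ ^ 2 - γ₂)) * X ^ 2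
        + C ((1 / 24) * (2 * γ₁ ^ 3 - 10 * γ₁ * γ₂ + 2 * γ₁ ^ 2 * S₀ + 2 * γ₂ * S₀
            + 3 * γ₁ * S₀ ^ 2 - S₀ ^ 3 + 14 * S₀₁ + 5 * γ₁ * S₁ - 5 * S₀ * S₁
            - 6 * S₂)) * X ^ 3) :
    1 - (1 / ((w₀ : ℚ) * (w₁ : ℚ) * (w₂ : ℚ))) *
        coeff 3 (lin (w₀ : ℚ) * lin (w₁ : ℚ) * lin (w₂ : ℚ) * T) =
      (((w₀ : ℚ) - (d₁ : ℚ)) * ((w₀ : ℚ) - (d₂ : ℚ)) /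
          (24 * (w₀ : ℚ) ^ 4 * (w₁ : ℚ) * (w₂ : ℚ))) *
        ((d₁ : ℚ) ^ 2 * ((d₂ : ℚ) ^ 2 + 3 * (d₂ : ℚ) * (w₀ : ℚ) + 2 * (w₀ : ℚ) ^ 2)
          + (d₁ : ℚ) * (w₀ : ℚ) *
              (3 * (d₂ : ℚ) ^ 2
                - (d₂ : ℚ) * (19 * (w₀ : ℚ) + 4 * ((w₁ : ℚ) + (w₂ : ℚ)))
                + 2 * (w₀ : ℚ) * ((w₀ : ℚ) - 2 * ((w₁ : ℚ) + (w₂ : ℚ))))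
          + 2 * (w₀ : ℚ) ^ 2 *
              ((d₂ : ℚ) ^ 2 + (d₂ : ℚ) * ((w₀ : ℚ) - 2 * ((w₁ : ℚ) + (w₂ : ℚ)))
                + 2 * (5 * (w₀ : ℚ) * ((w₁ : ℚ) + (w₂ : ℚ))
                    + 3 * (w₁ : ℚ) * (w₂ : ℚ)))) :=
  stmt_11_general w₀ w₁ w₂ d₁ d₂ hw₀ hw₁ hw₂ Q hQ γ₁ γ₂ hγ₁ hγ₂ S₀ S₁ S₂ S₀₁ hS₀ hS₁ hS₂ hS₀₁ T hT
end
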